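/- arXiv:1405.6791 — 3 statements merged into one kernel-verified Lean document; each statement's English description precedes it below -/
import Mathlib

section
/- Let δ_j = C(n−k, r−j)·C(k, j)/C(n, r) (the probability that a uniformly random weight-r point of {0,1}^n has exactly j ones among its first k coordinates). If r·k ≤ n·ln(1/ε) and r ≤ n/2, then δ_j ≤ (2·ln(1/ε))^j / j! for every j with 0 ≤ j ≤ min(r,k). -/
/-!
Since `n - k ≤ n - j`, `δ_j ≤ C(n-j, r-j) C(k,j) / C(n,r)`, and
`C(n-j, r-j) / C(n,r) = C(r,j) / C(n,j)`. Bounding `C(r,j) ≤ r^j/j!`, `C(k,j) ≤ k^j/j!` and,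
since `j ≤ r ≤ n/2`, `C(n,j) ≥ (n+1-j)^j/j! ≥ (n/2)^j/j!` gives `δ_j ≤ (2rk/n)^j / j!`,
and `rk ≤ n ln(1/ε)` finishes.
-/

namespace Nat

variable {K : Type*} [Field K] [LinearOrder K] [IsStrictOrderedRing K]

theorem choose_sub_div_choose_eq {n r j : ℕ} (hjr : j ≤ r) (hrn : r ≤ n) :
    ((n - j).choose (r - j) : K) / n.choose r = r.choose j / n.choose j := by
  have hnr : (n.choose r : K) ≠ 0 := by exact_mod_cast (choose_pos hrn).ne'
  have hnj : (n.choose j : K) ≠ 0 := by exact_mod_cast (choose_pos (hjr.trans hrn)).ne'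
  rw [div_eq_div_iff hnr hnj]
  norm_cast
  rw [mul_comm, ← choose_mul hjr, mul_comm]

theorem half_pow_div_factorial_le_choose {n j : ℕ} (h : 2 * j ≤ n + 2) :
    ((n : K) / 2) ^ j / j ! ≤ n.choose j := by
  refine le_trans ?_ (pow_le_choose j n)
  have hbase : (n : K) / 2 ≤ ((n + 1 - j : ℕ) : K) := by
    rw [div_le_iff₀ two_pos]
    exact_mod_cast (by omega : n ≤ (n + 1 - j) * 2)
  gcongr

theorem choose_mul_choose_div_choose_le {n r k j : ℕ} (h : 2 * j ≤ n) :
    (r.choose j * k.choose j : K) / n.choose j ≤ (2 * r * k / n) ^ j / j ! := by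
  obtain rfl | hn := n.eq_zero_or_pos
  · obtain rfl : j = 0 := by omega
    simp
  calc (r.choose j * k.choose j : K) / n.choose j
      ≤ (r ^ j / j ! * (k ^ j / j !)) / ((n / 2) ^ j / j !) := by
        refine div_le_div₀ (by positivity) ?_ (by positivity)
          (half_pow_div_factorial_le_choose (by omega))
        exact mul_le_mul (choose_le_pow_div j r) (choose_le_pow_div j k)
          (cast_nonneg _) (by positivity)
    _ = (2 * r * k / n) ^ j / j ! := by
        have hn' : (n : K) ≠ 0 := by exact_mod_cast hn.ne'
        rw [div_pow, div_pow, mul_pow, mul_pow]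
        field_simp

end Nat

theorem hypergeometric_bound_general (n k r : ℕ)
    (hr2 : 2 * r ≤ n) (ε : ℝ)
    (hrk : (r : ℝ) * k ≤ (n : ℝ) * Real.log (1 / ε)) :
    ∀ j : ℕ, j ≤ min r k →
      (((n - k).choose (r - j) : ℝ) * (k.choose j : ℝ)) / (n.choose r : ℝ)
        ≤ (2 * Real.log (1 / ε)) ^ j / (j.factorial : ℝ) := by
  intro j hj
  have hjr : j ≤ r := hj.trans (min_le_left _ _)
  have hjk : j ≤ k := hj.trans (min_le_right _ _)
  obtain rfl | hn := n.eq_zero_or_pos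
  · obtain rfl : r = 0 := by omega
    obtain rfl : j = 0 := by omega
    simp
  calc (((n - k).choose (r - j) : ℝ) * k.choose j) / n.choose r
      ≤ (((n - j).choose (r - j) : ℝ) * k.choose j) / n.choose r := by
        gcongr
    _ = (r.choose j * k.choose j : ℝ) / n.choose j := by
        rw [mul_div_right_comm, Nat.choose_sub_div_choose_eq hjr (by omega), div_mul_eq_mul_div]
    _ ≤ (2 * r * k / n) ^ j / j.factorial := Nat.choose_mul_choose_div_choose_le (by omega)
    _ ≤ (2 * Real.log (1 / ε)) ^ j / j.factorial := by
        gcongr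
        rw [div_le_iff₀ (by exact_mod_cast hn)]
        linarith

/-- Bound on the hypergeometric probabilities `δ_j = C(n-k,r-j)·C(k,j)/C(n,r)`:
if `rk ≤ n·ln(1/ε)` and `r ≤ n/2` then `δ_j ≤ (2 ln(1/ε))^j / j!`. -/
theorem hypergeometric_bound (n k r : ℕ) (hkn : k ≤ n) (hr : r ≤ n - k)
    (hr2 : 2 * r ≤ n) (ε : ℝ) (hε0 : 0 < ε) (hε1 : ε < 1)
    (hrk : (r : ℝ) * k ≤ (n : ℝ) * Real.log (1 / ε)) :
    ∀ j : ℕ, j ≤ min r k →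
      (((n - k).choose (r - j) : ℝ) * (k.choose j : ℝ)) / (n.choose r : ℝ)
        ≤ (2 * Real.log (1 / ε)) ^ j / (j.factorial : ℝ) :=
  hypergeometric_bound_general n k r hr2 ε hrk
end

section
/- Let λ = 2·ln(1/ε) for ε ∈ (0,1) and set t = ⌈8e²·ln(1/ε)⌉. Then ∑_{j = t+1}^{∞} C(j, t)² · λ^j / j! ≤ ε. -/
lemma choose_le_two_pow' (n k : ℕ) : n.choose k ≤ 2 ^ n := by
  rcases le_or_gt k n with h | h
  · calc n.choose k ≤ ∑ m ∈ Finset.range (n+1), n.choose m :=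
        Finset.single_le_sum (fun i _ => Nat.zero_le _) (Finset.mem_range.mpr (Nat.lt_succ_of_le h))
    _ = 2 ^ n := Nat.sum_range_choose n
  · rw [Nat.choose_eq_zero_of_lt h]; positivity

/-- With `λ = 2·ln(1/ε)` and `t = ⌈8e²·ln(1/ε)⌉`, the tail sum
`∑_{j>t} C(j,t)²·λ^j/j!` is at most `ε`. -/
theorem tail_sum_sq_bound (ε : ℝ) (hε0 : 0 < ε) (hε1 : ε < 1) :
    (∑' j : ℕ,
        (((j + (⌈8 * Real.exp 1 ^ 2 * Real.log (1 / ε)⌉₊ + 1)).choose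
            ⌈8 * Real.exp 1 ^ 2 * Real.log (1 / ε)⌉₊ : ℝ) ^ 2 *
          (2 * Real.log (1 / ε)) ^ (j + (⌈8 * Real.exp 1 ^ 2 * Real.log (1 / ε)⌉₊ + 1)) /
          ((j + (⌈8 * Real.exp 1 ^ 2 * Real.log (1 / ε)⌉₊ + 1)).factorial : ℝ)))
      ≤ ε := by
  set L := Real.log (1 / ε) with hLdef
  have hL : 0 < L := Real.log_pos (by rw [lt_div_iff₀ hε0]; linarith)
  set t := ⌈8 * Real.exp 1 ^ 2 * L⌉₊ with htdef
  have he : (0:ℝ) < Real.exp 1 := Real.exp_pos 1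
  have he2 : (2:ℝ) ≤ Real.exp 1 := by
    have := Real.add_one_le_exp (1:ℝ); linarith
  have ht : 8 * Real.exp 1 ^ 2 * L ≤ (t : ℝ) := Nat.le_ceil _
  set r : ℝ := (Real.exp 1)⁻¹ with hrdef
  have hr0 : 0 < r := by positivity
  have hre : r * Real.exp 1 = 1 := inv_mul_cancel₀ he.ne'
  have hr1 : r < 1 := by nlinarith
  have h2L : (0:ℝ) ≤ 2 * L := by linarith
  have key : ∀ j : ℕ,
      (((j + (t + 1)).choose t : ℝ) ^ 2 * (2 * L) ^ (j + (t + 1)) /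
        ((j + (t + 1)).factorial : ℝ)) ≤ r ^ (t + 1) * r ^ j := by
    intro j
    set n := j + (t + 1) with hndef
    have hn0 : 0 < n := by omega
    have hnr : (0:ℝ) < n := by exact_mod_cast hn0
    have hnn : 8 * Real.exp 1 ^ 2 * L ≤ (n : ℝ) := by
      refine ht.trans ?_
      exact_mod_cast Nat.le_of_lt_succ (by omega)
    have hfact : (n : ℝ) ^ n ≤ Real.exp 1 ^ n * (n.factorial : ℝ) := by
      have h := Real.pow_div_factorial_le_exp (x := (n : ℝ)) hnr.le n
      rw [div_le_iff₀ (by exact_mod_cast n.factorial_pos)] at h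
      calc (n:ℝ) ^ n ≤ Real.exp n * n.factorial := h
        _ = Real.exp 1 ^ n * n.factorial := by rw [← Real.exp_one_pow]
    have hchoose2 : ((n.choose t : ℝ)) ^ 2 ≤ (4:ℝ) ^ n := by
      have h1 : ((n.choose t : ℝ)) ≤ 2 ^ n := by exact_mod_cast choose_le_two_pow' n t
      have h2 : ((2:ℝ) ^ n) ^ 2 = 4 ^ n := by
        rw [← pow_mul, mul_comm, pow_mul]; norm_num
      calc ((n.choose t : ℝ)) ^ 2 ≤ ((2:ℝ) ^ n) ^ 2 := pow_le_pow_left₀ (by positivity) h1 2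
        _ = 4 ^ n := h2
    have hfpos : (0:ℝ) < (n.factorial : ℝ) := by exact_mod_cast n.factorial_pos
    have step1 : ((n.choose t : ℝ)) ^ 2 * (2 * L) ^ n / (n.factorial : ℝ)
        ≤ (8 * Real.exp 1 * L / n) ^ n := by
      rw [div_pow, div_le_div_iff₀ hfpos (by positivity)]
      calc ((n.choose t : ℝ)) ^ 2 * (2 * L) ^ n * (n:ℝ) ^ n
          ≤ (4:ℝ) ^ n * (2 * L) ^ n * (Real.exp 1 ^ n * (n.factorial : ℝ)) := by
            gcongr <;> positivity
        _ = (8 * Real.exp 1 * L) ^ n * (n.factorial : ℝ) := by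
            rw [show (4:ℝ) ^ n * (2 * L) ^ n * (Real.exp 1 ^ n * (n.factorial : ℝ)) =
                (4 * (2 * L) * Real.exp 1) ^ n * (n.factorial : ℝ) by
              rw [← mul_pow, mul_pow (4 * (2 * L)) (Real.exp 1)]; ring]
            congr 2
            ring
    have hbase : 8 * Real.exp 1 * L / n ≤ r := by
      rw [div_le_iff₀ hnr]
      have h := mul_le_mul_of_nonneg_left hnn hr0.le
      calc 8 * Real.exp 1 * L = r * (8 * Real.exp 1 ^ 2 * L) := by
            rw [pow_two]; nlinarith [hre]
        _ ≤ r * n := h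
    have step2 : (8 * Real.exp 1 * L / n) ^ n ≤ r ^ n :=
      pow_le_pow_left₀ (by positivity) hbase n
    calc ((n.choose t : ℝ)) ^ 2 * (2 * L) ^ n / (n.factorial : ℝ)
        ≤ r ^ n := step1.trans step2
      _ = r ^ (t + 1) * r ^ j := by rw [hndef, pow_add, mul_comm]
  have hgeo : Summable (fun j : ℕ => r ^ (t + 1) * r ^ j) :=
    (summable_geometric_of_lt_one hr0.le hr1).mul_left _
  have hnonneg : ∀ j : ℕ,
      0 ≤ (((j + (t + 1)).choose t : ℝ) ^ 2 * (2 * L) ^ (j + (t + 1)) /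
        ((j + (t + 1)).factorial : ℝ)) := fun j =>
    div_nonneg (mul_nonneg (by positivity) (pow_nonneg h2L _)) (by positivity)
  have hsumL : Summable (fun j : ℕ =>
      (((j + (t + 1)).choose t : ℝ) ^ 2 * (2 * L) ^ (j + (t + 1)) /
        ((j + (t + 1)).factorial : ℝ))) :=
    Summable.of_nonneg_of_le hnonneg key hgeo
  have hrhalf : 2 * r ≤ 1 := by nlinarith
  have he4 : (4:ℝ) ≤ Real.exp 1 ^ 2 := by nlinarith
  have hLt : L + 1 ≤ (t : ℝ) + 1 := by nlinarith
  have hrexp : r ^ (t + 1) ≤ ε * r := by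
    have h1 : r ^ (t + 1) = Real.exp (-(((t:ℝ)) + 1)) := by
      rw [hrdef, ← Real.exp_neg, ← Real.exp_nat_mul]
      push_cast; ring_nf
    have h2 : ε * r = Real.exp (-(L + 1)) := by
      have hlog : Real.log ε = -L := by rw [hLdef, one_div, Real.log_inv]; ring
      rw [hrdef, ← Real.exp_log hε0, ← Real.exp_neg, ← Real.exp_add, hlog]
      congr 1; ring
    rw [h1, h2]
    exact Real.exp_le_exp.mpr (by linarith)
  calc (∑' j : ℕ,
        (((j + (t + 1)).choose t : ℝ) ^ 2 * (2 * L) ^ (j + (t + 1)) /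
          ((j + (t + 1)).factorial : ℝ)))
      ≤ ∑' j : ℕ, r ^ (t + 1) * r ^ j := Summable.tsum_le_tsum key hsumL hgeo
    _ = r ^ (t + 1) * (1 - r)⁻¹ := by
        rw [tsum_mul_left, tsum_geometric_of_lt_one hr0.le hr1]
    _ ≤ (ε * r) * (1 - r)⁻¹ := by
        gcongr
    _ ≤ (ε * r) * 2 := by
        have hinv : (1 - r)⁻¹ ≤ 2 := by
          rw [show (2:ℝ) = (1/2 : ℝ)⁻¹ by norm_num]
          exact inv_anti₀ (by norm_num) (by linarith)
        exact mul_le_mul_of_nonneg_left hinv (by positivity)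
    _ ≤ ε := by nlinarith [mul_le_mul_of_nonneg_left hrhalf hε0.le]
end

section
/- Averaging a multivariate polynomial over Hamming-weight layers yields a univariate polynomial of the same degree: if p : {0,1}^n → ℝ is computed by a multilinear polynomial of degree at most d, then there exists a univariate real polynomial f of degree at most d such that for every 0 ≤ m ≤ n, E_{z ∼ D_m}[p(z)] = f(m), where D_m is uniform on the weight-m layer of {0,1}^n. -/
open Finset Polynomial

/-! By linearity it suffices to average a single monomial `x_S` with `#S = k`. On the weight-`m`
layer it is the indicator of the `m`-sets containing `S`; there are `C(n - k, m - k)` of these,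
and `C(n - k, m - k) * C(n, k) = C(n, m) * C(m, k)`, so the layer average of `x_S` is
`C(m, k) / C(n, k)`, and `m ↦ C(m, k) = m (m - 1) ⋯ (m - k + 1) / k!` is a polynomial of
degree `k`. -/

theorem card_filter_powersetCard_subset_mul_choose {α : Type*} [DecidableEq α] {s t : Finset α}
    (hst : s ⊆ t) (m : ℕ) :
    #((t.powersetCard m).filter (s ⊆ ·)) * (#t).choose #s = (#t).choose m * m.choose #s := by
  by_cases hsm : #s ≤ m
  · rw [card_filter_powersetCard_subset s t m hst hsm, Nat.choose_mul hsm, mul_comm]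
  · rw [not_le] at hsm
    rw [Nat.choose_eq_zero_of_lt hsm, mul_zero, mul_eq_zero, card_eq_zero, filter_eq_empty_iff]
    refine .inl fun T hT hsT => ?_
    have := card_le_card hsT
    rw [(mem_powersetCard.1 hT).2] at this
    omega

section ChoosePoly

variable (K : Type*) [Field K]

noncomputable def choosePoly (k : ℕ) : K[X] := C (k.factorial : K)⁻¹ * descPochhammer K k

theorem natDegree_choosePoly_le (k : ℕ) : (choosePoly K k).natDegree ≤ k :=
  (natDegree_C_mul_le _ _).trans (descPochhammer_natDegree K k).le

theorem eval_choosePoly [CharZero K] (k m : ℕ) : (choosePoly K k).eval (m : K) = m.choose k := by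
  rw [choosePoly, eval_mul, eval_C, descPochhammer_eval_eq_descFactorial,
    Nat.descFactorial_eq_factorial_mul_choose, Nat.cast_mul, inv_mul_cancel_left₀]
  exact_mod_cast k.factorial_ne_zero

end ChoosePoly

section BooleanCube

variable {ι : Type*} [Fintype ι] [DecidableEq ι]

theorem sum_filter_card_support_eq_sum_powersetCard {M : Type*} [AddCommMonoid M]
    (g : Finset ι → M) (m : ℕ) :
    ∑ z ∈ univ.filter (fun z : ι → Bool => #(univ.filter fun i => z i = true) = m),
        g (univ.filter fun i => z i = true) = ∑ T ∈ powersetCard m univ, g T := by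
  refine sum_nbij' (fun z => univ.filter fun i => z i = true) (fun T i => decide (i ∈ T))
    ?_ ?_ ?_ ?_ fun _ _ => rfl
  · intro z hz
    simpa using hz
  · intro T hT
    simpa using hT
  · intro z _
    funext i
    simp
  · intro T _
    ext i
    simp

theorem prod_ite_eq_ite_subset {R : Type*} [CommMonoidWithZero R] (z : ι → Bool)
    (S : Finset ι) :
    ∏ i ∈ S, (if z i then (1 : R) else 0) =
      if S ⊆ univ.filter (fun i => z i = true) then 1 else 0 := by
  rw [prod_boole]
  congr 1
  simp [subset_iff]

theorem layer_average_monomial {K : Type*} [Field K] [CharZero K] (S : Finset ι) {m : ℕ}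
    (hm : m ≤ Fintype.card ι) :
    (∑ z ∈ univ.filter (fun z : ι → Bool => #(univ.filter fun i => z i = true) = m),
        ∏ i ∈ S, (if z i then (1 : K) else 0)) / (Fintype.card ι).choose m
      = (m.choose #S : K) / (Fintype.card ι).choose #S := by
  simp_rw [prod_ite_eq_ite_subset]
  rw [sum_filter_card_support_eq_sum_powersetCard (fun T => if S ⊆ T then (1 : K) else 0),
    sum_boole]
  have key := card_filter_powersetCard_subset_mul_choose (subset_univ S) m
  rw [card_univ] at key
  have hSn : ((Fintype.card ι).choose #S : K) ≠ 0 :=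
    Nat.cast_ne_zero.2 (Nat.choose_pos (card_le_univ S)).ne'
  have hmn : ((Fintype.card ι).choose m : K) ≠ 0 := Nat.cast_ne_zero.2 (Nat.choose_pos hm).ne'
  rw [div_eq_div_iff hmn hSn, mul_comm (m.choose #S : K)]
  exact_mod_cast key

end BooleanCube

/-- Averaging a degree-`d` multilinear polynomial over the Hamming-weight layers
of `{0,1}^n` yields a univariate polynomial of degree at most `d`. -/
theorem layer_average_is_polynomial (n d : ℕ) (p : (Fin n → Bool) → ℝ)
    (α : Finset (Fin n) → ℝ) (hdeg : ∀ S : Finset (Fin n), d < S.card → α S = 0)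
    (hrep : ∀ x, p x = ∑ S : Finset (Fin n), α S * ∏ i ∈ S, (if x i then (1 : ℝ) else 0)) :
    ∃ f : Polynomial ℝ, f.natDegree ≤ d ∧
      ∀ m : ℕ, m ≤ n →
        (∑ z ∈ Finset.univ.filter (fun z : Fin n → Bool =>
            (Finset.univ.filter (fun i => z i = true)).card = m), p z) / (n.choose m : ℝ)
          = f.eval (m : ℝ) := by
  refine ⟨∑ S, C (α S / n.choose #S) * choosePoly ℝ #S, ?_, fun m hm => ?_⟩
  · refine natDegree_sum_le_of_forall_le _ _ fun S _ => ?_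
    rcases le_or_gt #S d with hS | hS
    · exact (natDegree_C_mul_le _ _).trans ((natDegree_choosePoly_le ℝ _).trans hS)
    · simp [hdeg S hS]
  · simp_rw [hrep]
    rw [sum_comm, sum_div, eval_finsetSum]
    refine sum_congr rfl fun S _ => ?_
    have hS := layer_average_monomial (K := ℝ) S (m := m) (by simpa using hm)
    rw [Fintype.card_fin] at hS
    rw [← mul_sum, mul_div_assoc, hS, eval_mul, eval_C, eval_choosePoly]
    ring
end
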